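/- Let n ≥ 1 and let a₁, a₂, a₃ ∈ ℤ[X_{n-1}]. If the purely periodic continued fraction [a₁, a₂, a₃, a₁, a₂, a₃, …] (i.e. the sequence c with c_{3k} = a₁, c_{3k+1} = a₂, c_{3k+2} = a₃ for all k ≥ 0) converges to X_n, then a₂² − X_n²·(a₂·a₃ + 1)² = −1, a₁·a₂ + 1 = X_n²·(a₂·a₃ + 1), and a₂·(a₂·a₃ + 1) > 0. (Equivalently, ε = a₂ + X_n·(a₂a₃+1) lies in RE_n⁻ with p(ε) = a₂ dividing both q(ε) − 1 and X_n²·q(ε) − 1, and sgn(p(ε)q(ε)) = 1.) -/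

import Mathlib

/-- `X n = 2 cos(2π/2^(n+2))`. -/
noncomputable def X (n : ℕ) : ℝ := 2 * Real.cos (2 * Real.pi / 2 ^ (n + 2))

/-- Convergent numerators: `cfNum c (k+1) = p_k`, with `cfNum c 0 = p_{-1} = 1`. -/
noncomputable def cfNum (c : ℕ → ℝ) : ℕ → ℝ
  | 0 => 1
  | 1 => c 0
  | (k + 2) => c (k + 1) * cfNum c (k + 1) + cfNum c k

/-- Convergent denominators: `cfDen c (k+1) = q_k`, with `cfDen c 0 = q_{-1} = 0`. -/
noncomputable def cfDen (c : ℕ → ℝ) : ℕ → ℝ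
  | 0 => 0
  | 1 => 1
  | (k + 2) => c (k + 1) * cfDen c (k + 1) + cfDen c k

/-- The continued fraction `[c₀, c₁, c₂, …]` converges to `x`. -/
def CFConv (c : ℕ → ℝ) (x : ℝ) : Prop :=
  Filter.Tendsto (fun k => cfNum c (k + 1) / cfDen c (k + 1)) Filter.atTop (nhds x)

/-!
Let `x = X n`, `y = X (n - 1)` and `b = a₂a₃ + 1`. Three steps of the convergent recursion multiply
`(p_{k-1}, q_{k-1})` by `M = [[a₁a₂a₃ + a₁ + a₃, a₁a₂ + 1], [b, a₂]]`, of determinant `-1`, so the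
limit `x` of the ratios is a fixed point of the Möbius map of `M`: a quadratic equation with
coefficients in `ℤ[y]`. As `x² = 2 + y` and `x ∉ ℚ(y)` (the degrees are `2ⁿ` and `2ⁿ⁻¹`, the lower
bound because `ℚ(ζ)`, for `ζ` a primitive `2^{n+2}`-th root of unity, is at most quadratic over
`ℚ(ζ + ζ⁻¹)`), it splits into `a₂ = a₁a₂a₃ + a₁ + a₃` and `a₁a₂ + 1 = x²b`; with these, `det M = -1`
is the norm equation. Finally `p ± xq` are eigencoordinates of `M` with eigenvalues `a₂ ± xb`, and
convergence of `p / q` to `x` rather than to `-x` forces `|a₂ - xb| < |a₂ + xb|`, i.e. `a₂b > 0`.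
-/

open Filter Topology IntermediateField

theorem cfNum_succ (c : ℕ → ℝ) :
    ∀ k, cfNum c (k + 1) = c 0 * cfNum (fun j => c (j + 1)) k + cfDen (fun j => c (j + 1)) k
  | 0 => by simp [cfNum, cfDen]
  | 1 => by simp [cfNum, cfDen]; ring
  | k + 2 => by
    rw [cfNum, cfNum_succ c (k + 1), cfNum_succ c k, cfNum, cfDen]
    ring

theorem cfDen_succ (c : ℕ → ℝ) : ∀ k, cfDen c (k + 1) = cfNum (fun j => c (j + 1)) k
  | 0 => by simp [cfNum, cfDen]
  | 1 => by simp [cfNum, cfDen]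
  | k + 2 => by rw [cfDen, cfDen_succ c (k + 1), cfDen_succ c k, cfNum]

theorem cfNum_add_three {c : ℕ → ℝ} (hc : Function.Periodic c 3) (k : ℕ) :
    cfNum c (k + 3) = (c 0 * c 1 * c 2 + c 0 + c 2) * cfNum c k + (c 0 * c 1 + 1) * cfDen c k := by
  have hshift : (fun j => c (j + 1 + 1 + 1)) = c := funext hc
  simp only [cfNum_succ, cfDen_succ, hshift]
  ring

theorem cfDen_add_three {c : ℕ → ℝ} (hc : Function.Periodic c 3) (k : ℕ) :
    cfDen c (k + 3) = (c 1 * c 2 + 1) * cfNum c k + c 1 * cfDen c k := by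
  have hshift : (fun j => c (j + 1 + 1 + 1)) = c := funext hc
  simp only [cfNum_succ, cfDen_succ, hshift]
  ring

theorem periodic_three_of_mod_three {α : Type*} {a₁ a₂ a₃ : α} {c : ℕ → α}
    (hc1 : ∀ k, c (3 * k) = a₁) (hc2 : ∀ k, c (3 * k + 1) = a₂) (hc3 : ∀ k, c (3 * k + 2) = a₃) :
    Function.Periodic c 3 := by
  intro k
  obtain ⟨j, rfl | rfl | rfl⟩ : ∃ j, k = 3 * j ∨ k = 3 * j + 1 ∨ k = 3 * j + 2 :=
    ⟨k / 3, by omega⟩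
  · rw [show 3 * j + 3 = 3 * (j + 1) by ring, hc1, hc1]
  · rw [show 3 * j + 1 + 3 = 3 * (j + 1) + 1 by ring, hc2, hc2]
  · rw [show 3 * j + 2 + 3 = 3 * (j + 1) + 2 by ring, hc3, hc3]

theorem CFConv.tendsto_three_mul {c : ℕ → ℝ} {x : ℝ} (h : CFConv c x) :
    Tendsto (fun k => cfNum c (3 * k) / cfDen c (3 * k)) atTop (𝓝 x) :=
  (tendsto_add_atTop_iff_nat 1).mp <| h.comp
    (tendsto_atTop_mono (fun k => by simp only [id]; omega) tendsto_id :
      Tendsto (fun k => 3 * k + 2) atTop atTop)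

theorem eventually_ne_zero_of_tendsto_div {A B : ℕ → ℝ} {x : ℝ}
    (h : Tendsto (fun k => A k / B k) atTop (𝓝 x)) (hx : x ≠ 0) : ∀ᶠ k in atTop, B k ≠ 0 := by
  filter_upwards [h.eventually_ne hx] with k hk hB
  simp [hB] at hk

theorem quadratic_eq_of_tendsto_div {a b c d x : ℝ} {A B : ℕ → ℝ}
    (hA : ∀ k, A (k + 1) = a * A k + b * B k) (hB : ∀ k, B (k + 1) = c * A k + d * B k)
    (h : Tendsto (fun k => A k / B k) atTop (𝓝 x)) (hx : x ≠ 0) :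
    c * x ^ 2 + d * x = a * x + b := by
  have hB0 := eventually_ne_zero_of_tendsto_div h hx
  have hB1 : ∀ᶠ k in atTop, B (k + 1) ≠ 0 := tendsto_add_atTop_nat 1 |>.eventually hB0
  have hnum : Tendsto (fun k => A (k + 1) / B k) atTop (𝓝 (a * x + b)) := by
    refine ((h.const_mul a).add_const b).congr' ?_
    filter_upwards [hB0] with k hk
    rw [hA, add_div, mul_div_assoc, mul_div_assoc, div_self hk, mul_one]
  have hden : Tendsto (fun k => B (k + 1) / B k) atTop (𝓝 (c * x + d)) := by
    refine ((h.const_mul c).add_const d).congr' ?_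
    filter_upwards [hB0] with k hk
    rw [hB, add_div, mul_div_assoc, mul_div_assoc, div_self hk, mul_one]
  have hprod : Tendsto (fun k => A (k + 1) / B k) atTop (𝓝 (x * (c * x + d))) := by
    refine ((h.comp (tendsto_add_atTop_nat 1)).mul hden).congr' ?_
    filter_upwards [hB1] with k hk
    simp only [Function.comp_apply, div_mul_div_cancel₀ hk]
  linear_combination tendsto_nhds_unique hprod hnum

theorem abs_lt_abs_of_tendsto_pow_div {μ ν : ℝ} (hν : ν ≠ 0)
    (h : Tendsto (fun k => μ ^ k / ν ^ k) atTop (𝓝 0)) : |μ| < |ν| := by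
  simp only [← div_pow, tendsto_pow_atTop_nhds_zero_iff, abs_div] at h
  rwa [div_lt_one (abs_pos.mpr hν)] at h

theorem mul_pos_of_tendsto_div {c d x : ℝ} {A B : ℕ → ℝ}
    (hA : ∀ k, A (k + 1) = d * A k + x ^ 2 * c * B k) (hB : ∀ k, B (k + 1) = c * A k + d * B k)
    (hA0 : A 0 = 1) (hB0 : B 0 = 0) (h : Tendsto (fun k => A k / B k) atTop (𝓝 x)) (hx : 0 < x)
    (hdet : d ^ 2 - x ^ 2 * c ^ 2 = -1) : 0 < d * c := by
  have hplus (k : ℕ) : A k + x * B k = (d + x * c) ^ k := by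
    induction k with
    | zero => simp [hA0, hB0]
    | succ k ih => rw [hA, hB]; linear_combination (d + x * c) * ih
  have hminus (k : ℕ) : A k - x * B k = (d - x * c) ^ k := by
    induction k with
    | zero => simp [hA0, hB0]
    | succ k ih => rw [hA, hB]; linear_combination (d - x * c) * ih
  have hratio : Tendsto (fun k => (d - x * c) ^ k / (d + x * c) ^ k) atTop (𝓝 0) := by
    have hlim := (h.sub_const x).div (h.add_const x) (by linarith)
    rw [sub_self, zero_div] at hlim
    refine hlim.congr' ?_
    filter_upwards [eventually_ne_zero_of_tendsto_div h hx.ne'] with k hk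
    rw [Pi.div_apply, ← hplus, ← hminus]
    field_simp
  have hne : d + x * c ≠ 0 := left_ne_zero_of_mul (b := d - x * c)
    (by rw [show (d + x * c) * (d - x * c) = -1 by linear_combination hdet]; norm_num)
  have hsq := sq_lt_sq.mpr (abs_lt_abs_of_tendsto_pow_div hne hratio)
  nlinarith

theorem eq_zero_of_mul_eq_of_notMem {L S : Type*} [DivisionRing L] [SetLike S L]
    [SubfieldClass S L] {F : S} {x r s : L} (hx : x ∉ F) (hr : r ∈ F) (hs : s ∈ F)
    (h : r * x = s) : r = 0 ∧ s = 0 := by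
  have hr0 : r = 0 := by
    by_contra hr0
    refine hx ?_
    rw [show x = r⁻¹ * s by rw [← h, inv_mul_cancel_left₀ hr0]]
    exact mul_mem (inv_mem hr) hs
  exact ⟨hr0, by rw [← h, hr0, zero_mul]⟩

theorem mem_adjoin_simple_of_mem_adjoin_int {L : Type*} [Field L] [CharZero L] {y r : L}
    (h : r ∈ Algebra.adjoin ℤ {y}) : r ∈ ℚ⟮y⟯ :=
  Algebra.adjoin_le (S := ℚ⟮y⟯.toSubalgebra.restrictScalars ℤ)
    (Set.singleton_subset_iff.mpr (mem_adjoin_simple_self ℚ y)) h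

theorem natDegree_minpoly_le_two_mul {F E : Type*} [Field F] [Field E] [Algebra F E] {y z : E}
    (hy : IsIntegral F y) (hz : z ^ 2 - y * z + 1 = 0) :
    (minpoly F z).natDegree ≤ 2 * (minpoly F y).natDegree := by
  set K := F⟮y⟯
  have : FiniteDimensional F K := adjoin.finiteDimensional hy
  set p : Polynomial K :=
    Polynomial.X ^ 2 - Polynomial.C (AdjoinSimple.gen F y) * Polynomial.X + 1
  have hp : p.Monic := by unfold p; monicity!
  have hpz : Polynomial.aeval z p = 0 := by simpa [p] using hz
  have hzK : IsIntegral K z := ⟨p, hp, hpz⟩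
  set L := K⟮z⟯
  have : FiniteDimensional K L := adjoin.finiteDimensional hzK
  have : FiniteDimensional F L := Module.Finite.trans K _
  have : FiniteDimensional F (L.restrictScalars F) := this
  have : Module.Free K L := Module.Free.of_divisionRing K L
  have hKL : Module.finrank K L ≤ 2 := by
    rw [adjoin.finrank hzK]
    refine (Polynomial.natDegree_le_natDegree
      (minpoly.degree_le_of_ne_zero K z hp.ne_zero hpz)).trans ?_
    unfold p; compute_degree!
  have hzL : z ∈ L.restrictScalars F := mem_adjoin_simple_self K z
  calc (minpoly F z).natDegree = (minpoly F (⟨z, hzL⟩ : L.restrictScalars F)).natDegree := by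
        rw [IntermediateField.minpoly_eq]
    _ ≤ Module.finrank F (L.restrictScalars F) := minpoly.natDegree_le _
    _ = Module.finrank F K * Module.finrank K L := (Module.finrank_mul_finrank F K L).symm
    _ ≤ (minpoly F y).natDegree * 2 := by rw [← adjoin.finrank hy]; gcongr
    _ = 2 * (minpoly F y).natDegree := mul_comm _ _

theorem X_zero : X 0 = 0 := by
  rw [X, show 2 * Real.pi / 2 ^ (0 + 2) = Real.pi / 2 by ring, Real.cos_pi_div_two, mul_zero]

theorem X_succ_sq (m : ℕ) : X (m + 1) ^ 2 = 2 + X m := by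
  have h : 2 * Real.pi / 2 ^ (m + 2) = 2 * (2 * Real.pi / 2 ^ (m + 1 + 2)) := by
    rw [pow_succ 2 (m + 2)]; field_simp
  rw [X, X, h, Real.cos_two_mul]
  ring

theorem X_succ_pos (m : ℕ) : 0 < X (m + 1) := by
  set θ := 2 * Real.pi / 2 ^ (m + 1 + 2)
  have hθ : θ < Real.pi / 2 := by
    have h8 : (2 : ℝ) ^ 3 ≤ 2 ^ (m + 1 + 2) := pow_le_pow_right₀ (by norm_num) (by omega)
    rw [div_lt_div_iff₀ (by positivity) (by norm_num)]
    nlinarith [Real.pi_pos]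
  have hcos := Real.cos_pos_of_mem_Ioo ⟨by linarith [Real.pi_pos, (by positivity : 0 < θ)], hθ⟩
  rw [X]
  positivity

noncomputable def layerPoly : ℕ → Polynomial ℚ
  | 0 => Polynomial.X
  | m + 1 => (layerPoly m).comp (Polynomial.X ^ 2 - Polynomial.C 2)

theorem layerPoly_monic (m : ℕ) : (layerPoly m).Monic := by
  induction m with
  | zero => exact Polynomial.monic_X
  | succ m ih =>
    exact ih.comp (by monicity!) (by rw [Polynomial.natDegree_X_pow_sub_C]; norm_num)

theorem natDegree_layerPoly (m : ℕ) : (layerPoly m).natDegree = 2 ^ m := by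
  induction m with
  | zero => simp [layerPoly]
  | succ m ih =>
    rw [layerPoly, Polynomial.natDegree_comp, ih, Polynomial.natDegree_X_pow_sub_C, pow_succ]

theorem aeval_X_layerPoly (m : ℕ) : Polynomial.aeval (X m) (layerPoly m) = 0 := by
  induction m with
  | zero => simp [layerPoly, X_zero]
  | succ m ih => simp [layerPoly, Polynomial.aeval_comp, X_succ_sq, ih]

theorem isIntegral_X (m : ℕ) : IsIntegral ℚ (X m) :=
  ⟨layerPoly m, layerPoly_monic m, by rw [← Polynomial.aeval_def, aeval_X_layerPoly]⟩

theorem natDegree_minpoly_X_le (m : ℕ) : (minpoly ℚ (X m)).natDegree ≤ 2 ^ m :=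
  natDegree_layerPoly m ▸ Polynomial.natDegree_le_natDegree
    (minpoly.degree_le_of_ne_zero ℚ _ (layerPoly_monic m).ne_zero (aeval_X_layerPoly m))

theorem ofReal_X (m : ℕ) :
    (X m : ℂ) = Complex.exp (2 * Real.pi * Complex.I / (2 ^ (m + 2) : ℕ)) +
      (Complex.exp (2 * Real.pi * Complex.I / (2 ^ (m + 2) : ℕ)))⁻¹ := by
  rw [X, ← Complex.exp_neg]
  push_cast
  rw [Complex.two_cos]
  ring_nf

theorem two_pow_le_natDegree_minpoly_X (m : ℕ) : 2 ^ m ≤ (minpoly ℚ (X m)).natDegree := by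
  set ζ := Complex.exp (2 * Real.pi * Complex.I / (2 ^ (m + 2) : ℕ))
  have hζ : IsPrimitiveRoot ζ (2 ^ (m + 2)) := Complex.isPrimitiveRoot_exp _ (by positivity)
  have hquad : ζ ^ 2 - (X m : ℂ) * ζ + 1 = 0 := by
    rw [ofReal_X]; field_simp [Complex.exp_ne_zero]; ring
  have hdeg :=
    natDegree_minpoly_le_two_mul (isIntegral_X m).algebraMap (y := algebraMap ℝ ℂ (X m)) hquad
  rw [← Polynomial.cyclotomic_eq_minpoly_rat hζ (by positivity), Polynomial.natDegree_cyclotomic,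
    Nat.totient_prime_pow_succ Nat.prime_two,
    minpoly.algebraMap_eq (algebraMap ℝ ℂ).injective] at hdeg
  omega

theorem natDegree_minpoly_X (m : ℕ) : (minpoly ℚ (X m)).natDegree = 2 ^ m :=
  (natDegree_minpoly_X_le m).antisymm (two_pow_le_natDegree_minpoly_X m)

theorem X_succ_notMem_adjoin (m : ℕ) : X (m + 1) ∉ ℚ⟮X m⟯ := by
  intro h
  have : FiniteDimensional ℚ ℚ⟮X m⟯ := adjoin.finiteDimensional (isIntegral_X m)
  have hle := finrank_le_of_le_right (adjoin_simple_le_iff.mpr h)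
  rw [adjoin.finrank (isIntegral_X _), adjoin.finrank (isIntegral_X _), natDegree_minpoly_X,
    natDegree_minpoly_X, pow_succ] at hle
  have := Nat.one_le_two_pow (n := m)
  omega

theorem stmt7 (n : ℕ) (hn : 1 ≤ n) (a₁ a₂ a₃ : ℝ)
    (ha₁ : a₁ ∈ Algebra.adjoin ℤ ({X (n - 1)} : Set ℝ))
    (ha₂ : a₂ ∈ Algebra.adjoin ℤ ({X (n - 1)} : Set ℝ))
    (ha₃ : a₃ ∈ Algebra.adjoin ℤ ({X (n - 1)} : Set ℝ))
    (c : ℕ → ℝ) (hc1 : ∀ k, c (3 * k) = a₁) (hc2 : ∀ k, c (3 * k + 1) = a₂)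
    (hc3 : ∀ k, c (3 * k + 2) = a₃)
    (hconv : CFConv c (X n)) :
    a₂ ^ 2 - X n ^ 2 * (a₂ * a₃ + 1) ^ 2 = -1 ∧
      a₁ * a₂ + 1 = X n ^ 2 * (a₂ * a₃ + 1) ∧ a₂ * (a₂ * a₃ + 1) > 0 := by
  obtain ⟨m, rfl⟩ : ∃ m, n = m + 1 := ⟨n - 1, by omega⟩
  rw [Nat.add_sub_cancel] at ha₁ ha₂ ha₃
  replace ha₁ := mem_adjoin_simple_of_mem_adjoin_int ha₁
  replace ha₂ := mem_adjoin_simple_of_mem_adjoin_int ha₂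
  replace ha₃ := mem_adjoin_simple_of_mem_adjoin_int ha₃
  have hper := periodic_three_of_mod_three hc1 hc2 hc3
  obtain ⟨h0, h1, h2⟩ : c 0 = a₁ ∧ c 1 = a₂ ∧ c 2 = a₃ := ⟨hc1 0, hc2 0, hc3 0⟩
  -- `A k = p_{3k-1}` and `B k = q_{3k-1}`, so `A 0 = 1` and `B 0 = 0`.
  set A := fun k => cfNum c (3 * k)
  set B := fun k => cfDen c (3 * k)
  have hA (k : ℕ) : A (k + 1) = (a₁ * a₂ * a₃ + a₁ + a₃) * A k + (a₁ * a₂ + 1) * B k := by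
    rw [← h0, ← h1, ← h2]; exact cfNum_add_three hper (3 * k)
  have hB (k : ℕ) : B (k + 1) = (a₂ * a₃ + 1) * A k + a₂ * B k := by
    rw [← h1, ← h2]; exact cfDen_add_three hper (3 * k)
  have hlim : Tendsto (fun k => A k / B k) atTop (𝓝 (X (m + 1))) := hconv.tendsto_three_mul
  have hx := X_succ_pos m
  have hsq := X_succ_sq m
  have hfix := quadratic_eq_of_tendsto_div hA hB hlim hx.ne'
  obtain ⟨htrace, hconst⟩ := eq_zero_of_mul_eq_of_notMem (X_succ_notMem_adjoin m)
    (r := a₂ - (a₁ * a₂ * a₃ + a₁ + a₃)) (s := a₁ * a₂ + 1 - (a₂ * a₃ + 1) * (2 + X m))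
    (sub_mem ha₂ (add_mem (add_mem (mul_mem (mul_mem ha₁ ha₂) ha₃) ha₁) ha₃))
    (sub_mem (add_mem (mul_mem ha₁ ha₂) (one_mem _)) (mul_mem (add_mem (mul_mem ha₂ ha₃)
      (one_mem _)) (add_mem (ofNat_mem _ 2) (mem_adjoin_simple_self ℚ _))))
    (by linear_combination hfix - (a₂ * a₃ + 1) * hsq)
  have hdiag : a₁ * a₂ + 1 = X (m + 1) ^ 2 * (a₂ * a₃ + 1) := by
    linear_combination hconst - (a₂ * a₃ + 1) * hsq
  have hnorm : a₂ ^ 2 - X (m + 1) ^ 2 * (a₂ * a₃ + 1) ^ 2 = -1 := by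
    linear_combination a₂ * htrace + (a₂ * a₃ + 1) * hdiag
  refine ⟨hnorm, hdiag, mul_pos_of_tendsto_div (fun k => ?_) hB rfl rfl hlim hx hnorm⟩
  rw [hA, ← hdiag]
  linear_combination -A k * htrace
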